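/- arXiv:2004.08487 — 3 statements merged into one kernel-verified Lean document; each statement's English description precedes it below -/
import Mathlib

section
/- Every closed symmetric monoidal poset P that is a lattice admits a map f into some ∗-autonomous poset Q that is a lattice, such that f is an order-embedding (x ≤ y if and only if f(x) ≤ f(y)) and preserves all the structure: f(x · y) = f(x) · f(y), f(1) = 1, f(x ⊸ y) = f(x) ⊸ f(y), f(x ⊓ y) = f(x) ⊓ f(y), and f(x ⊔ y) = f(x) ⊔ f(y) for all x, y in P. -/
/-!
Adjoining a bottom and a top to `P` (with `⊥` absorbing, then `⊤` absorbing, for the product)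
gives a bounded closed symmetric monoidal lattice `L` into which `P` embeds, and whose elements
`a ≠ ⊥` satisfy `a · ⊤ = ⊤`; the bottom is what makes `⊤ ⊸ a` exist. The Chu construction on `L` with dualizing element `⊤` then makes
`L × Lᵒᵈ` a ∗-autonomous lattice, with `(a, b) · (c, d) = (a · c, (a ⊸ d) ⊓ (c ⊸ b))`,
`(a, b) ⊸ (c, d) = ((a ⊸ c) ⊓ (d ⊸ b), a · d)` and negation `(a, b) ↦ (b, a)`;
the map `a ↦ (a, ⊤)` preserves all the structure on elements with `a · ⊤ = ⊤`.
-/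

universe u

namespace StarAutPoset

/-- A closed symmetric monoidal structure on a poset: a commutative monoid structure that is
monotone in each variable, together with an internal hom `himp` satisfying the residuation
law `x · y ≤ z ↔ x ≤ y ⊸ z`. -/
structure CSMStr (P : Type u) [PartialOrder P] where
  mul : P → P → P
  one : P
  mul_comm : ∀ x y : P, mul x y = mul y x
  mul_assoc : ∀ x y z : P, mul (mul x y) z = mul x (mul y z)
  mul_one : ∀ x : P, mul x one = x
  mul_mono : ∀ {x x' y y' : P}, x ≤ x' → y ≤ y' → mul x y ≤ mul x' y'
  himp : P → P → P
  residuation : ∀ x y z : P, mul x y ≤ z ↔ x ≤ himp y z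

/-- A ∗-autonomous structure on a poset: a closed symmetric monoidal structure together with
an element `bot` such that `(x ⊸ ⊥) ⊸ ⊥ = x` for all `x`. -/
structure StarAutStr (P : Type u) [PartialOrder P] extends CSMStr P where
  bot : P
  double_neg : ∀ x : P, himp (himp x bot) bot = x

theorem mul_mono_of_residuation {α : Type*} [Preorder α] {m h : α → α → α}
    (comm : ∀ x y, m x y = m y x) (res : ∀ x y z, m x y ≤ z ↔ x ≤ h y z)
    {x x' y y' : α} (hx : x ≤ x') (hy : y ≤ y') : m x y ≤ m x' y' := by
  have mono_left : ∀ {x x' : α} (y : α), x ≤ x' → m x y ≤ m x' y :=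
    fun y hx => (res _ _ _).2 (hx.trans ((res _ _ _).1 le_rfl))
  calc m x y ≤ m x' y := mono_left y hx
    _ = m y x' := comm _ _
    _ ≤ m y' x' := mono_left x' hy
    _ = m x' y' := comm _ _

theorem WithBotTop.coe_inf {P : Type u} [Lattice P] (x y : P) :
    ((x ⊓ y : P) : WithBotTop P) = (x : WithBotTop P) ⊓ y := by
  simp [WithBotTop.coe, ← WithBot.coe_inf, ← WithTop.coe_inf]

theorem WithBotTop.coe_sup {P : Type u} [Lattice P] (x y : P) :
    ((x ⊔ y : P) : WithBotTop P) = (x : WithBotTop P) ⊔ y := by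
  simp [WithBotTop.coe, ← WithBot.coe_sup, ← WithTop.coe_sup]

section toChu

open OrderDual

def toChu {L : Type u} [Top L] (x : L) : L × Lᵒᵈ := (x, toDual ⊤)

theorem toChu_le_toChu_iff {L : Type u} [Preorder L] [Top L] {x y : L} :
    toChu x ≤ toChu y ↔ x ≤ y := by
  simp [toChu, Prod.mk_le_mk]

variable {L : Type u} [Lattice L] [Top L]

theorem toChu_inf (x y : L) : toChu (x ⊓ y) = toChu x ⊓ toChu y := by
  simp [toChu]

theorem toChu_sup (x y : L) : toChu (x ⊔ y) = toChu x ⊔ toChu y := by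
  simp [toChu]

end toChu

namespace CSMStr

section PartialOrder

variable {L : Type u} [PartialOrder L] (s : CSMStr L)

theorem mul_himp_le (y z : L) : s.mul (s.himp y z) y ≤ z :=
  (s.residuation _ _ _).2 le_rfl

theorem himp_mono {x x' y y' : L} (hx : x' ≤ x) (hy : y ≤ y') :
    s.himp x y ≤ s.himp x' y' :=
  (s.residuation _ _ _).1 ((s.mul_mono le_rfl hx).trans ((s.mul_himp_le x y).trans hy))

theorem le_himp_comm (x y z : L) : x ≤ s.himp y z ↔ y ≤ s.himp x z := by
  rw [← s.residuation, ← s.residuation, s.mul_comm]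

theorem himp_himp (x y z : L) : s.himp x (s.himp y z) = s.himp (s.mul x y) z :=
  eq_of_forall_le_iff fun w => by
    rw [← s.residuation, ← s.residuation, ← s.residuation, s.mul_assoc]

theorem one_himp (x : L) : s.himp s.one x = x :=
  eq_of_forall_le_iff fun w => by rw [← s.residuation, s.mul_one]

end PartialOrder

section SemilatticeInf

variable {L : Type u} [SemilatticeInf L] (s : CSMStr L)

theorem himp_inf (x y z : L) : s.himp x (y ⊓ z) = s.himp x y ⊓ s.himp x z := by
  refine le_antisymm (le_inf (s.himp_mono le_rfl inf_le_left) (s.himp_mono le_rfl inf_le_right))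
    ((s.residuation _ _ _).1 (le_inf ?_ ?_))
  · exact (s.mul_mono inf_le_left le_rfl).trans (s.mul_himp_le _ _)
  · exact (s.mul_mono inf_le_right le_rfl).trans (s.mul_himp_le _ _)

theorem himp_top [OrderTop L] (x : L) : s.himp x ⊤ = ⊤ :=
  top_unique ((s.residuation _ _ _).1 le_top)

end SemilatticeInf

section WithBotTop

variable {P : Type u} [PartialOrder P] (s : CSMStr P)

def withBotTopMul : WithBotTop P → WithBotTop P → WithBotTop P
  | ⊥, _ | _, ⊥ => ⊥
  | ⊤, _ | _, ⊤ => ⊤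
  | (a : P), (b : P) => s.mul a b

def withBotTopHimp : WithBotTop P → WithBotTop P → WithBotTop P
  | ⊥, _ | _, ⊤ => ⊤
  | ⊤, _ | _, ⊥ => ⊥
  | (a : P), (b : P) => s.himp a b

theorem withBotTopMul_comm (x y : WithBotTop P) :
    s.withBotTopMul x y = s.withBotTopMul y x := by
  induction x using WithBotTop.rec <;> induction y using WithBotTop.rec <;>
    simp [withBotTopMul, WithBotTop.coe, s.mul_comm]

theorem withBotTopMul_assoc (x y z : WithBotTop P) :
    s.withBotTopMul (s.withBotTopMul x y) z = s.withBotTopMul x (s.withBotTopMul y z) := by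
  induction x using WithBotTop.rec <;> induction y using WithBotTop.rec <;>
    induction z using WithBotTop.rec <;> simp [withBotTopMul, WithBotTop.coe, s.mul_assoc]

theorem withBotTopMul_le_iff (x y z : WithBotTop P) :
    s.withBotTopMul x y ≤ z ↔ x ≤ s.withBotTopHimp y z := by
  induction x using WithBotTop.rec <;> induction y using WithBotTop.rec <;>
    induction z using WithBotTop.rec <;>
    simp [withBotTopMul, withBotTopHimp, WithBotTop.coe, s.residuation]

def withBotTop : CSMStr (WithBotTop P) where
  mul := s.withBotTopMul
  one := s.one
  mul_comm := s.withBotTopMul_comm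
  mul_assoc := s.withBotTopMul_assoc
  mul_one x := by
    induction x using WithBotTop.rec <;> simp [withBotTopMul, WithBotTop.coe, s.mul_one]
  mul_mono := mul_mono_of_residuation s.withBotTopMul_comm s.withBotTopMul_le_iff
  himp := s.withBotTopHimp
  residuation := s.withBotTopMul_le_iff

theorem withBotTop_mul_coe (a b : P) : s.withBotTop.mul a b = s.mul a b := rfl

theorem withBotTop_himp_coe (a b : P) : s.withBotTop.himp a b = s.himp a b := rfl

theorem withBotTop_mul_coe_top (a : P) : s.withBotTop.mul a ⊤ = ⊤ := rfl

end WithBotTop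

section Chu

open OrderDual

variable {L : Type u} [SemilatticeInf L] [OrderTop L] (s : CSMStr L)

def chu : StarAutStr (L × Lᵒᵈ) where
  mul x y := (s.mul x.1 y.1, toDual (s.himp x.1 (ofDual y.2) ⊓ s.himp y.1 (ofDual x.2)))
  one := (s.one, toDual ⊤)
  mul_comm x y := by rw [s.mul_comm, inf_comm]
  mul_assoc x y z := by
    simp only [ofDual_toDual, himp_inf, himp_himp, s.mul_comm z.1 x.1,
      s.mul_comm z.1 y.1, s.mul_assoc, inf_assoc]
  mul_one x := by simp [himp_top, one_himp, s.mul_one]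
  mul_mono {x x' y y'} hx hy := Prod.mk_le_mk.2
    ⟨s.mul_mono hx.1 hy.1, toDual_le_toDual.2 (inf_le_inf
      (s.himp_mono hx.1 (toDual_le_toDual.1 hy.2)) (s.himp_mono hy.1 (toDual_le_toDual.1 hx.2)))⟩
  himp x y := (s.himp x.1 y.1 ⊓ s.himp (ofDual y.2) (ofDual x.2), toDual (s.mul x.1 (ofDual y.2)))
  residuation x y z := by
    simp only [Prod.le_def, toDual_le, le_toDual, le_inf_iff]
    rw [s.residuation, s.le_himp_comm (ofDual z.2), ← s.residuation (ofDual z.2),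
      s.mul_comm (ofDual z.2)]
    tauto
  bot := (⊤, toDual s.one)
  double_neg x := by simp [himp_top, one_himp, s.mul_one]

theorem chu_mul_toChu (x y : L) : s.chu.mul (toChu x) (toChu y) = toChu (s.mul x y) := by
  simp [chu, toChu, himp_top]

theorem chu_one : s.chu.one = toChu s.one := rfl

theorem chu_himp_toChu {x : L} (hx : s.mul x ⊤ = ⊤) (y : L) :
    s.chu.himp (toChu x) (toChu y) = toChu (s.himp x y) := by
  simp [chu, toChu, himp_top, hx]

end Chu

end CSMStr

open CSMStr in
/-- Every closed symmetric monoidal poset that is a lattice admits an order-embedding into a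
∗-autonomous poset that is a lattice, preserving multiplication, unit, internal hom, and
binary meets and joins. -/
theorem csm_lattice_embeds_in_star_autonomous_lattice
    (P : Type u) [Lattice P] (s : CSMStr P) :
    ∃ (Q : Type u) (instQ : Lattice Q),
      letI := instQ
      ∃ (t : StarAutStr Q) (f : P → Q),
        (∀ x y : P, x ≤ y ↔ f x ≤ f y) ∧
        (∀ x y : P, f (s.mul x y) = t.mul (f x) (f y)) ∧
        f s.one = t.one ∧
        (∀ x y : P, f (s.himp x y) = t.himp (f x) (f y)) ∧
        (∀ x y : P, f (x ⊓ y) = f x ⊓ f y) ∧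
        (∀ x y : P, f (x ⊔ y) = f x ⊔ f y) := by
  refine ⟨WithBotTop P × (WithBotTop P)ᵒᵈ, inferInstance, s.withBotTop.chu,
    fun x => toChu (x : WithBotTop P), fun x y => ?_, fun x y => ?_, s.withBotTop.chu_one.symm,
    fun x y => ?_,
    fun x y => ?_, fun x y => ?_⟩
  · rw [toChu_le_toChu_iff, WithBotTop.coe_le_coe]
  · rw [chu_mul_toChu, withBotTop_mul_coe]
  · rw [chu_himp_toChu _ (s.withBotTop_mul_coe_top x), withBotTop_himp_coe]
  · simp only [WithBotTop.coe_inf, toChu_inf]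
  · simp only [WithBotTop.coe_sup, toChu_sup]

end StarAutPoset
end

section
/- There exists a small symmetric monoidal closed category C possessing an initial object 0 such that for every ∗-autonomous category D and every fully faithful strong symmetric monoidal closed functor F : C ⥤ D, the object F(0) is not initial in D. In other words, not every symmetric monoidal closed category with an initial object admits a strong symmetric monoidal closed full embedding into a ∗-autonomous category preserving the initial object. -/
/-!
Take the three-element chain `0 < 1 < 2` as a Heyting algebra, monoidal closed under `⊓` with
`⇨` as internal hom; there `1 ⇨ 0 = 0` and `0 ⇨ 0 = 2 = 𝟙_`. Suppose `F 0` is initial in a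
∗-autonomous `𝒟`. Then `𝟙_ ≅ F (0 ⇨ 0) ≅ (F 0 ⊸ F 0)` is terminal, so `F 0 ⊸ ⊥ ≅ 𝟙_` and double
dualization gives `F 0 ≅ ⊥`. Hence `F 1 ⊸ ⊥ ≅ F (1 ⇨ 0) = F 0` is initial, which yields a global
element `𝟙_ ⟶ (F 1 ⊸ ⊥) ⊸ ⊥ ≅ F 1`; fullness pulls it back to `2 ≤ 1`. The argument only uses a
dense element `a ≠ ⊤` (`aᶜ = ⊥`) of a Heyting algebra.
-/

open CategoryTheory MonoidalCategory MonoidalClosed Limits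

universe v u

namespace StarAutEmbedding

variable {C : Type u} [Category.{v} C] [MonoidalCategory C] [SymmetricCategory C]
  [MonoidalClosed C]

/-- The canonical double-dualization morphism `X ⟶ ((X ⊸ ⊥) ⊸ ⊥)`, the currying of the
evaluation `(X ⊸ ⊥) ⊗ X ⟶ ⊥` obtained from the braiding and the evaluation
`X ⊗ (X ⊸ ⊥) ⟶ ⊥`. -/
def doubleDual (bot X : C) : X ⟶ (ihom ((ihom X).obj bot)).obj bot :=
  MonoidalClosed.curry ((β_ ((ihom X).obj bot) X).hom ≫ (ihom.ev X).app bot)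

/-- A bundled ∗-autonomous category: a symmetric monoidal closed category equipped with
a dualizing object `bot`. -/
structure StarAut : Type (max (v + 1) (u + 1)) where
  carrier : Type u
  [cat : Category.{v} carrier]
  [mon : MonoidalCategory carrier]
  [sym : SymmetricCategory carrier]
  [closed : MonoidalClosed carrier]
  bot : carrier
  dualizing : ∀ X : carrier, IsIso (doubleDual bot X)

attribute [instance] StarAut.cat StarAut.mon StarAut.sym StarAut.closed

/-- The canonical internal-hom comparison morphism `F(A ⊸ B) ⟶ (F A ⊸ F B)` of a lax
monoidal functor: the currying of `μ` followed by `F` applied to the evaluation. -/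
def homComparison {C : Type u} {D : Type u₂} [Category.{v} C] [Category.{v₂} D]
    [MonoidalCategory C] [MonoidalClosed C] [MonoidalCategory D] [MonoidalClosed D]
    (F : C ⥤ D) [F.LaxMonoidal] (A B : C) :
    F.obj ((ihom A).obj B) ⟶ (ihom (F.obj A)).obj (F.obj B) :=
  MonoidalClosed.curry (Functor.LaxMonoidal.μ F A ((ihom A).obj B) ≫ F.map ((ihom.ev A).app B))

/-- A strong symmetric monoidal closed functor: a strong symmetric (= braided) monoidal
functor all of whose internal-hom comparison morphisms are isomorphisms. -/
structure StrongClosedFunctor (C : Type u) (D : Type u₂) [Category.{v} C] [Category.{v₂} D]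
    [MonoidalCategory C] [SymmetricCategory C] [MonoidalClosed C]
    [MonoidalCategory D] [SymmetricCategory D] [MonoidalClosed D] where
  F : C ⥤ D
  [braided : F.Braided]
  homIso : ∀ A B : C, IsIso (homComparison F A B)

/-- A bundled symmetric monoidal closed category. -/
structure SMC : Type (max (v + 1) (u + 1)) where
  carrier : Type u
  [cat : Category.{v} carrier]
  [mon : MonoidalCategory carrier]
  [sym : SymmetricCategory carrier]
  [closed : MonoidalClosed carrier]

attribute [instance] SMC.cat SMC.mon SMC.sym SMC.closed

attribute [instance] StrongClosedFunctor.braided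

-- The monoidal structure on a meet-semilattice with top (`⊗ = ⊓`, `𝟙_ = ⊤`) is scoped here.
open CategoryTheory.SemilatticeInf

noncomputable instance HeytingAlgebra.monoidalClosed (H : Type u) [HeytingAlgebra H] :
    MonoidalClosed H where
  closed a :=
    { rightAdj := Monotone.functor (f := (a ⇨ ·)) fun _ _ => himp_le_himp_left
      adj := Adjunction.mkOfHomEquiv
        { homEquiv := fun b c =>
            { toFun := fun f => homOfLE (le_himp_iff'.mpr (leOfHom f))
              invFun := fun g => homOfLE (le_himp_iff'.mp (leOfHom g))
              left_inv := fun _ => Subsingleton.elim _ _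
              right_inv := fun _ => Subsingleton.elim _ _ } } }

noncomputable def StrongClosedFunctor.mapIhomIso {D : Type u₂} [Category.{v₂} D]
    [MonoidalCategory D] [SymmetricCategory D] [MonoidalClosed D]
    (F : StrongClosedFunctor C D) (A B : C) :
    F.F.obj ((ihom A).obj B) ≅ (ihom (F.F.obj A)).obj (F.F.obj B) :=
  haveI := F.homIso A B
  asIso (homComparison F.F A B)

noncomputable def isTerminalIhomOfIsInitial {k : C} (hk : IsInitial k) (b : C) :
    IsTerminal ((ihom k).obj b) :=
  IsTerminal.ofUniqueHom (fun Z => curry ((hk.isInitialObj (tensorRight Z)).to b))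
    (fun Z _ => (eq_curry_iff _ _).mpr ((hk.isInitialObj (tensorRight Z)).hom_ext _ _))

namespace StarAut

variable (𝒟 : StarAut.{v, u})

noncomputable def isoBotOfDualIsoUnit {X : 𝒟.carrier}
    (e : (ihom X).obj 𝒟.bot ≅ 𝟙_ 𝒟.carrier) : X ≅ 𝒟.bot :=
  haveI := 𝒟.dualizing X
  asIso (doubleDual 𝒟.bot X) ≪≫ (internalHom.mapIso e.symm.op).app 𝒟.bot ≪≫
    (unitNatIso.app 𝒟.bot).symm

noncomputable def homUnitOfIsInitialDual {X : 𝒟.carrier}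
    (h : IsInitial ((ihom X).obj 𝒟.bot)) : 𝟙_ 𝒟.carrier ⟶ X :=
  haveI := 𝒟.dualizing X
  curry ((ρ_ _).hom ≫ h.to 𝒟.bot) ≫ inv (doubleDual 𝒟.bot X)

noncomputable def isoBotOfIsInitial (hunit : IsTerminal (𝟙_ 𝒟.carrier)) {k : 𝒟.carrier}
    (hk : IsInitial k) : k ≅ 𝒟.bot :=
  𝒟.isoBotOfDualIsoUnit ((isTerminalIhomOfIsInitial hk 𝒟.bot).uniqueUpToIso hunit)

noncomputable def homUnitOfIsInitialIhom (hunit : IsTerminal (𝟙_ 𝒟.carrier))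
    {k X : 𝒟.carrier} (hk : IsInitial k) (h : IsInitial ((ihom X).obj k)) :
    𝟙_ 𝒟.carrier ⟶ X :=
  𝒟.homUnitOfIsInitialDual (h.ofIso ((ihom X).mapIso (𝒟.isoBotOfIsInitial hunit hk)))

end StarAut

theorem StrongClosedFunctor.not_nonempty_isInitial_obj_bot {H : Type u} [HeytingAlgebra H]
    {a : H} (ha : aᶜ = ⊥) (ha_ne_top : a ≠ ⊤) (𝒟 : StarAut.{v, u₂})
    (F : StrongClosedFunctor H 𝒟.carrier) [F.F.Full] : ¬ Nonempty (IsInitial (F.F.obj ⊥)) := by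
  rintro ⟨hk⟩
  have hunit : IsTerminal (𝟙_ 𝒟.carrier) :=
    (isTerminalIhomOfIsInitial hk (F.F.obj ⊥)).ofIso
      (Functor.Monoidal.εIso F.F ≪≫ F.F.mapIso (eqToIso himp_self.symm) ≪≫
        F.mapIhomIso ⊥ ⊥).symm
  have hdual : IsInitial ((ihom (F.F.obj a)).obj (F.F.obj ⊥)) :=
    hk.ofIso (F.F.mapIso (eqToIso (show ⊥ = a ⇨ ⊥ by rw [himp_bot, ha])) ≪≫ F.mapIhomIso a ⊥)
  have htop_le : ⊤ ≤ a := leOfHom (F.F.preimage ((Functor.Monoidal.εIso F.F).inv ≫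
    𝒟.homUnitOfIsInitialIhom hunit hk hdual))
  exact ha_ne_top (top_le_iff.mp htop_le)

/-- There exists a small symmetric monoidal closed category `𝒞` with an initial object `zero`
such that for every ∗-autonomous category `𝒟` and every fully faithful strong symmetric
monoidal closed functor `F : 𝒞 ⥤ 𝒟`, the object `F zero` is not initial in `𝒟`. -/
theorem exists_smcc_with_initial_not_preserved :
    ∃ (𝒞 : SMC.{0, 0}) (zero : 𝒞.carrier),
      Nonempty (IsInitial zero) ∧
      ∀ (𝒟 : StarAut.{v, u}) (F : StrongClosedFunctor 𝒞.carrier 𝒟.carrier),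
        F.F.Full → F.F.Faithful → ¬ Nonempty (IsInitial (F.F.obj zero)) := by
  refine ⟨⟨Fin 3⟩, ⊥, ⟨Preorder.isInitialBot _⟩, fun 𝒟 F _ _ => ?_⟩
  exact F.not_nonempty_isInitial_obj_bot (a := 1) (by decide) (by decide) 𝒟

end StarAutEmbedding
end

section
/- Let C be a small category, S a small index set, and for each s ∈ S let c_s be a colimit cocone over a diagram A_s : J_s ⥤ C with J_s a small category. Let D be the full subcategory of the presheaf category [Cᵒᵖ, Type] consisting of those presheaves W that send each cocone c_s to a limit cone, i.e., such that the cone with apex W(apex of c_s) whose legs are W applied to the legs of c_s is a limit cone over the diagram W ∘ A_sᵒᵖ in Type. Then: (a) every representable presheaf lies in D; (b) D is a reflective subcategory of [Cᵒᵖ, Type] (the inclusion admits a left adjoint); and (c) the corestriction of the Yoneda embedding to a functor C ⥤ D is fully faithful and sends each cocone c_s to a colimit cocone in D. -/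
/-!
A presheaf `W` sends a cocone `c` over `A` to a limit cone exactly when it is local with respect
to the canonical map `colim_j y(A j) ⟶ y(c.pt)`: by the Yoneda lemma, `Hom(-, W)` turns this map
into the comparison `W(c.pt) ⟶ lim_j W(A j)`. Hence `D` is the class of objects orthogonal to a
small set of morphisms between presentable objects of the locally presentable category
`[Cᵒᵖ, Type]`, and the orthogonal-reflection construction makes it reflective. Representables
lie in `D` because `c` is a colimit, and `y(c)` is a colimit cocone in `D` since maps from it
into `W ∈ D` are computed by the limit cone `W(c)`.
-/

open CategoryTheory Limits

universe w v u

namespace CategoryTheory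

lemma exists_isCardinalPresentable_forall {C : Type u} [Category.{v} C] {ι : Type w}
    (X : ι → C) [∀ i, IsPresentable.{w} (X i)] :
    ∃ (κ : Cardinal.{w}) (_ : Fact κ.IsRegular), ∀ i, IsCardinalPresentable (X i) κ := by
  choose κ _ hX using fun i =>
    Functor.IsAccessible.exists_cardinal (F := coyoneda.obj (Opposite.op (X i)))
  obtain ⟨κ', hκ', hlt⟩ :=
    HasCardinalLT.exists_regular_cardinal_forall.{w} fun i => (κ i).ord.ToType
  have : Fact κ'.IsRegular := ⟨hκ'⟩
  refine ⟨κ', this, fun i => isCardinalPresentable_of_le (κ := κ i) _ (le_of_lt ?_)⟩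
  simpa [hasCardinalLT_iff_cardinal_mk_lt] using hlt i

namespace MorphismProperty

lemma isLocal_ofHoms_iff {C : Type u} [Category.{v} C] {ι : Type*} {X Y : ι → C}
    (f : ∀ i, X i ⟶ Y i) (Z : C) :
    (ofHoms f).isLocal Z ↔ ∀ i, Function.Bijective (fun g : Y i ⟶ Z => f i ≫ g) :=
  ⟨fun h i => h _ ⟨i⟩, fun h _ _ _ ⟨i⟩ => h i⟩

lemma isRightAdjoint_ι_isLocal_ofHoms {C : Type u} [Category.{v} C] [IsLocallyPresentable.{w} C]
    [LocallySmall.{w} C] {ι : Type w} {X Y : ι → C} (f : ∀ i, X i ⟶ Y i) :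
    (ofHoms f).isLocal.ι.IsRightAdjoint := by
  obtain ⟨κ₀, _, _⟩ := IsLocallyPresentable.exists_cardinal.{w} C
  obtain ⟨κ, _, hκ⟩ := exists_isCardinalPresentable_forall (Sum.elim X Y)
  exact isRightAdjoint_ι_isLocal _ κ fun _ _ _ ⟨i⟩ => ⟨hκ (.inl i), hκ (.inr i)⟩

end MorphismProperty

end CategoryTheory

namespace ContinuousPresheaves

/-- A presheaf `W` sends a cocone `c` to a limit cone if the cone obtained by applying `W`
to `c` (i.e. `W.mapCone c.op`) is a limit cone in `Type`. -/
def SendsToLimit {C : Type u} [SmallCategory C] {J : Type u} [SmallCategory J] {A : J ⥤ C}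
    (c : Cocone A) (W : Cᵒᵖ ⥤ Type u) : Prop :=
  Nonempty (IsLimit (W.mapCone c.op))

section

variable {C : Type u} [SmallCategory C] {J : Type u} [SmallCategory J] {A : J ⥤ C}

lemma sendsToLimit_yoneda_obj {c : Cocone A} (hc : IsColimit c) (X : C) :
    SendsToLimit c (yoneda.obj X) :=
  ⟨c.isColimitYonedaEquiv hc X⟩

lemma sendsToLimit_iff_nonempty_isLimit_yoneda_obj_mapCone (c : Cocone A) (W : Cᵒᵖ ⥤ Type u) :
    SendsToLimit c W ↔ Nonempty (IsLimit ((yoneda.obj W).mapCone (yoneda.mapCocone c).op)) :=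
  ⟨fun ⟨h⟩ => ⟨IsLimit.mapConeEquiv (curriedYonedaLemma'.app W).symm h⟩,
    fun ⟨h⟩ => ⟨IsLimit.mapConeEquiv (curriedYonedaLemma'.app W) h⟩⟩

lemma sendsToLimit_iff_bijective (c : Cocone A) (W : Cᵒᵖ ⥤ Type u) :
    SendsToLimit c W ↔ Function.Bijective
      (fun g : yoneda.obj c.pt ⟶ W => colimit.desc (A ⋙ yoneda) (yoneda.mapCocone c) ≫ g) := by
  let hL : IsLimit ((yoneda.obj W).mapCone (colimit.cocone (A ⋙ yoneda)).op) :=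
    isLimitOfPreserves (yoneda.obj W) (colimit.isColimit _).op
  have hlift : hL.lift ((yoneda.obj W).mapCone (yoneda.mapCocone c).op) =
      (yoneda.obj W).map (colimit.desc (A ⋙ yoneda) (yoneda.mapCocone c)).op :=
    hL.hom_ext fun j => by
      rw [hL.fac]
      ext g
      exact (colimit.ι_desc_assoc _ _ g).symm
  rw [sendsToLimit_iff_nonempty_isLimit_yoneda_obj_mapCone, hL.nonempty_isLimit_iff_isIso_lift,
    hlift, isIso_iff_bijective]
  rfl

end

section

variable {C : Type u} [SmallCategory C] (P : ObjectProperty (Cᵒᵖ ⥤ Type u))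
  (hy : ∀ X, P (yoneda.obj X))

noncomputable def liftYonedaOpCompYonedaObjIso (W : P.FullSubcategory) :
    (P.lift yoneda hy).op ⋙ yoneda.obj W ≅ W.obj :=
  NatIso.ofComponents (fun _ => P.fullyFaithfulι.homEquiv.toIso) (fun _ => rfl) ≪≫
    curriedYonedaLemma'.app W.obj

lemma nonempty_isColimit_lift_yoneda_mapCocone {J : Type u} [SmallCategory J] {A : J ⥤ C}
    {c : Cocone A} (hP : ∀ W, P W → SendsToLimit c W) :
    Nonempty (IsColimit ((P.lift yoneda hy).mapCocone c)) :=
  ⟨(Cocone.isColimitYonedaEquiv _).symm fun W =>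
    IsLimit.mapConeEquiv (liftYonedaOpCompYonedaObjIso P hy W).symm (hP W.obj W.property).some⟩

end

theorem continuous_presheaves_reflective_and_yoneda_corestriction
    (C : Type u) [SmallCategory C]
    (S : Type u) (J : S → Type u) [∀ s, SmallCategory (J s)]
    (A : ∀ s, J s ⥤ C) (c : ∀ s, Cocone (A s)) (hc : ∀ s, IsColimit (c s)) :
    -- (a) every representable presheaf lies in the full subcategory
    ∃ hy : ∀ X : C, ∀ s, SendsToLimit (c s) (yoneda.obj X),
      -- (b) the full subcategory is reflective: the inclusion has a left adjoint
      (ObjectProperty.ι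
        (fun W : Cᵒᵖ ⥤ Type u => ∀ s, SendsToLimit (c s) W)).IsRightAdjoint ∧
      -- (c) the corestriction of the Yoneda embedding is fully faithful ...
      (ObjectProperty.lift (fun W : Cᵒᵖ ⥤ Type u => ∀ s, SendsToLimit (c s) W)
        yoneda hy).Full ∧
      (ObjectProperty.lift (fun W : Cᵒᵖ ⥤ Type u => ∀ s, SendsToLimit (c s) W)
        yoneda hy).Faithful ∧
      -- ... and sends each cocone `c s` to a colimit cocone
      (∀ s, Nonempty (IsColimit
        ((ObjectProperty.lift (fun W : Cᵒᵖ ⥤ Type u => ∀ s, SendsToLimit (c s) W)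
          yoneda hy).mapCocone (c s)))) := by
  have hD : (fun W : Cᵒᵖ ⥤ Type u => ∀ s, SendsToLimit (c s) W) =
      (MorphismProperty.ofHoms fun s =>
        colimit.desc (A s ⋙ yoneda) (yoneda.mapCocone (c s))).isLocal := by
    ext W
    rw [MorphismProperty.isLocal_ofHoms_iff]
    exact forall_congr' fun s => sendsToLimit_iff_bijective (c s) W
  refine ⟨fun X s => sendsToLimit_yoneda_obj (hc s) X, ?_, inferInstance, inferInstance,
    fun s => nonempty_isColimit_lift_yoneda_mapCocone _ _ fun _ hW => hW s⟩
  rw [hD]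
  exact MorphismProperty.isRightAdjoint_ι_isLocal_ofHoms _

end ContinuousPresheaves
end
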